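/- arXiv:1911.05822 — 2 statements merged into one kernel-verified Lean document; each statement's English description precedes it below -/
import Mathlib

section
/- Let κ > 0 with κ > min_{t∈ℝ} E[(H + tS)_−²], where H is standard Gaussian and S = GY with G standard Gaussian and Y ∈ {±1}. Define η(q, ρ) = E[(ρ S + H√(1 − ρ²) − 1/q)_−²] − (1 − ρ²)κ and let q⋆ be the unique zero of q ↦ min_{−1 ≤ ρ ≤ 1} η(q, ρ). Then the function ρ ↦ η(q⋆, ρ) admits a unique minimizer ρ⋆ on [−1, 1]. -/
/-!
In polar coordinates `(a, b) = q (ρ, √(1 - ρ²))` one has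
`η(q, ρ) = (J(a, b) - κ b²) / q²` with `J(a, b) = E[(aS + bH - 1)₋²]`. Since `(·)₋` is concave,
`√J` is convex by Minkowski's inequality, so the region `Z = {b > 0, J(a, b) ≤ κ b²}` is convex.
As `η` is decreasing in `q` and `min η(q⋆, ·) = 0`, a point of `Z` strictly inside the circle of
radius `q⋆` would make `min η(q, ·)` vanish at a smaller `q`, contradicting the uniqueness of
`q⋆`. A minimizer of `η(q⋆, ·)` has value `0`, hence (as `J > 0`) gives a point of `Z` on that
circle. Two distinct minimizers would give two such points, whose midpoint lies in `Z` strictly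
inside the circle.
-/

open MeasureTheory ProbabilityTheory Filter Set

/-- The negative part `(x)₋ = min x 0`. -/
noncomputable def negp (x : ℝ) : ℝ := min x 0

/-- The standard Gaussian measure on `ℝ`. -/
noncomputable def stdGaussianR : Measure ℝ := gaussianReal 0 1

lemma continuous_negp : Continuous negp := continuous_id.min continuous_const

lemma negp_mul_of_nonneg {t : ℝ} (ht : 0 ≤ t) (x : ℝ) : negp (t * x) = t * negp x := by
  simp only [negp, mul_min_of_nonneg _ _ ht, mul_zero]

lemma sq_negp_le_sq (x : ℝ) : negp x ^ 2 ≤ x ^ 2 := by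
  rcases le_total x 0 with h | h <;> simp [negp, h]

lemma sq_negp_antitone : Antitone fun x => negp x ^ 2 := fun x y h => by
  simp only [negp]
  nlinarith [min_le_min h (le_refl (0 : ℝ)), min_le_right y 0]

lemma sq_negp_pos {x : ℝ} (hx : x < 0) : 0 < negp x ^ 2 := by
  simp only [negp, min_eq_left hx.le]
  nlinarith

lemma abs_negp (x : ℝ) : |negp x| = max (-x) 0 := by
  rcases le_total x 0 with h | h <;> simp [negp, h]

lemma abs_negp_midpoint (x y : ℝ) : |negp ((x + y) / 2)| ≤ (|negp x| + |negp y|) / 2 := by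
  simp only [abs_negp]
  exact max_le (by linarith [le_max_left (-x) 0, le_max_left (-y) 0]) (by positivity)

lemma sq_negp_le_of_abs_le {a b A B : ℝ} (ha : |a| ≤ A) (hb : |b| ≤ B) (s h c : ℝ) :
    negp (a * s + b * h - c) ^ 2 ≤ 3 * (A ^ 2 * s ^ 2 + B ^ 2 * h ^ 2 + c ^ 2) := by
  have hA : a ^ 2 ≤ A ^ 2 := sq_le_sq' (abs_le.mp ha).1 (abs_le.mp ha).2
  have hB : b ^ 2 ≤ B ^ 2 := sq_le_sq' (abs_le.mp hb).1 (abs_le.mp hb).2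
  nlinarith [sq_negp_le_sq (a * s + b * h - c), sq_nonneg (a * s - b * h),
    sq_nonneg (a * s + c), sq_nonneg (b * h + c), sq_nonneg s, sq_nonneg h]

lemma integral_sq_le_of_abs_le_midpoint {Ω : Type*} [MeasurableSpace Ω] {P : Measure Ω}
    {u v w : Ω → ℝ} (hu : Integrable (fun ω => u ω ^ 2) P) (hv : Integrable (fun ω => v ω ^ 2) P)
    {A B : ℝ} (hA : 0 < A) (hB : 0 < B)
    (huA : ∫ ω, u ω ^ 2 ∂P ≤ A ^ 2) (hvB : ∫ ω, v ω ^ 2 ∂P ≤ B ^ 2)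
    (hw : ∀ ω, |w ω| ≤ (|u ω| + |v ω|) / 2) :
    ∫ ω, w ω ^ 2 ∂P ≤ ((A + B) / 2) ^ 2 := by
  -- Cauchy–Schwarz, through `2 |u| |v| ≤ (B / A) u² + (A / B) v²` with the optimal weight
  have hpt : ∀ ω, w ω ^ 2 ≤ ((1 + B / A) * u ω ^ 2 + (1 + A / B) * v ω ^ 2) / 4 := by
    intro ω
    have hw2 : w ω ^ 2 ≤ ((|u ω| + |v ω|) / 2) ^ 2 := by
      rw [← sq_abs (w ω)]
      exact pow_le_pow_left₀ (abs_nonneg _) (hw ω) 2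
    have hamgm : 2 * (|u ω| * |v ω|) ≤ B / A * u ω ^ 2 + A / B * v ω ^ 2 := by
      have hsq : B / A * u ω ^ 2 + A / B * v ω ^ 2 - 2 * (|u ω| * |v ω|)
          = (B * |u ω| - A * |v ω|) ^ 2 / (A * B) := by
        rw [← sq_abs (u ω), ← sq_abs (v ω)]
        field_simp
        ring
      linarith [div_nonneg (sq_nonneg (B * |u ω| - A * |v ω|)) (mul_pos hA hB).le]
    nlinarith [sq_abs (u ω), sq_abs (v ω)]
  calc ∫ ω, w ω ^ 2 ∂P
      ≤ ∫ ω, ((1 + B / A) * u ω ^ 2 + (1 + A / B) * v ω ^ 2) / 4 ∂P :=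
        integral_mono_of_nonneg (ae_of_all _ fun ω => sq_nonneg _)
          (((hu.const_mul _).add (hv.const_mul _)).div_const 4) (ae_of_all _ hpt)
    _ = ((1 + B / A) * ∫ ω, u ω ^ 2 ∂P + (1 + A / B) * ∫ ω, v ω ^ 2 ∂P) / 4 := by
        rw [integral_div, integral_add (hu.const_mul _) (hv.const_mul _), integral_const_mul,
          integral_const_mul]
    _ ≤ ((1 + B / A) * A ^ 2 + (1 + A / B) * B ^ 2) / 4 := by gcongr
    _ = ((A + B) / 2) ^ 2 := by field_simp; ring

section Gaussian

variable {Ω : Type*} [MeasurableSpace Ω] {P : Measure Ω} {X : Ω → ℝ}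

lemma integrable_sq_of_map_eq_stdGaussianR (hX : AEMeasurable X P)
    (hlaw : P.map X = stdGaussianR) : Integrable (fun ω => X ω ^ 2) P := by
  have h : MemLp id 2 (P.map X) := hlaw ▸ memLp_id_gaussianReal 2
  exact ((memLp_map_measure_iff aestronglyMeasurable_id hX).mp h).integrable_sq

lemma measure_preimage_pos_of_map_eq_stdGaussianR (hX : AEMeasurable X P)
    (hlaw : P.map X = stdGaussianR) {s : Set ℝ} (hs : MeasurableSet s) (hvol : volume s ≠ 0) :
    0 < P (X ⁻¹' s) := by
  rw [← Measure.map_apply_of_aemeasurable hX hs, hlaw, pos_iff_ne_zero]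
  exact fun h => hvol (gaussianReal_absolutelyContinuous' 0 one_ne_zero h)

end Gaussian

section Eta

variable {Ω : Type*} [MeasurableSpace Ω] {P : Measure Ω} {S H : Ω → ℝ}

variable (P S H) in
noncomputable def negSqMean (a b c : ℝ) : ℝ := ∫ ω, negp (a * S ω + b * H ω - c) ^ 2 ∂P

variable (P S H) in
noncomputable def eta (κ q ρ : ℝ) : ℝ :=
  negSqMean P S H ρ √(1 - ρ ^ 2) (1 / q) - (1 - ρ ^ 2) * κ

lemma negSqMean_nonneg (a b c : ℝ) : 0 ≤ negSqMean P S H a b c :=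
  integral_nonneg fun _ => sq_nonneg _

lemma negSqMean_mul {s : ℝ} (hs : 0 ≤ s) (a b c : ℝ) :
    negSqMean P S H (s * a) (s * b) (s * c) = s ^ 2 * negSqMean P S H a b c := by
  rw [negSqMean, negSqMean, ← integral_const_mul]
  congr 1 with ω
  rw [show s * a * S ω + s * b * H ω - s * c = s * (a * S ω + b * H ω - c) by ring,
    negp_mul_of_nonneg hs, mul_pow]

lemma negSqMean_mono {a b c c' : ℝ}
    (hint : Integrable (fun ω => negp (a * S ω + b * H ω - c') ^ 2) P) (hc : c ≤ c') :
    negSqMean P S H a b c ≤ negSqMean P S H a b c' :=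
  integral_mono_of_nonneg (ae_of_all _ fun _ => sq_nonneg _) hint
    (ae_of_all _ fun _ => sq_negp_antitone (by linarith))

lemma integrable_negp_sq [IsFiniteMeasure P] (hS : AEStronglyMeasurable S P)
    (hH : AEStronglyMeasurable H P) (hS2 : Integrable (fun ω => S ω ^ 2) P)
    (hH2 : Integrable (fun ω => H ω ^ 2) P) (a b c : ℝ) :
    Integrable (fun ω => negp (a * S ω + b * H ω - c) ^ 2) P := by
  refine Integrable.mono' (g := fun ω => 3 * (|a| ^ 2 * S ω ^ 2 + |b| ^ 2 * H ω ^ 2 + c ^ 2))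
    ((((hS2.const_mul _).add (hH2.const_mul _)).add (integrable_const _)).const_mul 3)
    ((continuous_negp.comp_aestronglyMeasurable
      (((hS.const_mul a).add (hH.const_mul b)).sub aestronglyMeasurable_const)).pow 2)
    (ae_of_all _ fun ω => ?_)
  rw [Real.norm_of_nonneg (sq_nonneg _)]
  exact sq_negp_le_of_abs_le le_rfl le_rfl _ _ _

lemma continuous_negSqMean [IsFiniteMeasure P] (hS : AEStronglyMeasurable S P)
    (hH : AEStronglyMeasurable H P) (hS2 : Integrable (fun ω => S ω ^ 2) P)
    (hH2 : Integrable (fun ω => H ω ^ 2) P) (c : ℝ) :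
    Continuous fun p : ℝ × ℝ => negSqMean P S H p.1 p.2 c := by
  rw [continuous_iff_continuousAt]
  rintro ⟨a₀, b₀⟩
  refine continuousAt_of_dominated
    (bound := fun ω => 3 * ((|a₀| + 1) ^ 2 * S ω ^ 2 + (|b₀| + 1) ^ 2 * H ω ^ 2 + c ^ 2))
    (Eventually.of_forall fun p =>
      (integrable_negp_sq hS hH hS2 hH2 p.1 p.2 c).aestronglyMeasurable) ?_
    ((((hS2.const_mul _).add (hH2.const_mul _)).add (integrable_const _)).const_mul 3)
    (ae_of_all _ fun ω => ((continuous_negp.comp (by fun_prop)).pow 2).continuousAt)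
  filter_upwards [Metric.ball_mem_nhds (a₀, b₀) one_pos] with p hp
  rw [Metric.mem_ball, Prod.dist_eq, max_lt_iff, Real.dist_eq, Real.dist_eq] at hp
  refine ae_of_all _ fun ω => ?_
  rw [Real.norm_of_nonneg (sq_nonneg _)]
  exact sq_negp_le_of_abs_le (by linarith [abs_sub_abs_le_abs_sub p.1 a₀])
    (by linarith [abs_sub_abs_le_abs_sub p.2 b₀]) _ _ _

lemma eta_le_eta_of_le {κ q q' : ℝ}
    (hint : ∀ a b c, Integrable (fun ω => negp (a * S ω + b * H ω - c) ^ 2) P)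
    (hq : 0 < q) (hqq' : q ≤ q') (ρ : ℝ) : eta P S H κ q' ρ ≤ eta P S H κ q ρ :=
  sub_le_sub_right (negSqMean_mono (hint _ _ _) (one_div_le_one_div_of_le hq hqq')) _

lemma bddBelow_eta {κ : ℝ} (hκ : 0 ≤ κ) (q : ℝ) :
    BddBelow (range fun ρ : Icc (-1 : ℝ) 1 => eta P S H κ q ρ) := by
  refine ⟨-κ, ?_⟩
  rintro _ ⟨ρ, rfl⟩
  have := negSqMean_nonneg (P := P) (S := S) (H := H) ρ √(1 - (ρ : ℝ) ^ 2) (1 / q)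
  simp only [eta]
  nlinarith [sq_nonneg (ρ : ℝ)]

lemma eta_div_eq {κ a b q : ℝ} (hb : 0 ≤ b) (hq : 0 < q) (hab : a ^ 2 + b ^ 2 = q ^ 2) :
    eta P S H κ q (a / q) = (negSqMean P S H a b 1 - κ * b ^ 2) / q ^ 2 := by
  have h1 : 1 - (a / q) ^ 2 = (b / q) ^ 2 := by field_simp; linarith
  have hsc := negSqMean_mul (P := P) (S := S) (H := H) (inv_nonneg.mpr hq.le) a b 1
  rw [eta, h1, Real.sqrt_sq (div_nonneg hb hq.le)]
  simp only [div_eq_inv_mul, mul_one] at hsc ⊢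
  rw [hsc]
  field_simp

lemma continuous_eta [IsFiniteMeasure P] (hS : AEStronglyMeasurable S P)
    (hH : AEStronglyMeasurable H P) (hS2 : Integrable (fun ω => S ω ^ 2) P)
    (hH2 : Integrable (fun ω => H ω ^ 2) P) (κ q : ℝ) : Continuous (eta P S H κ q) :=
  ((continuous_negSqMean hS hH hS2 hH2 (1 / q)).comp
    (continuous_id.prodMk (by fun_prop))).sub (by fun_prop)

lemma negSqMean_pos {G : Ω → ℝ} (hG : AEMeasurable G P) (hGlaw : P.map G = stdGaussianR)
    (hH : AEMeasurable H P) (hHlaw : P.map H = stdGaussianR) (hSG : ∀ ω, |S ω| = |G ω|)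
    (hindep : IndepFun S H P) {ρ t c : ℝ}
    (hint : Integrable (fun ω => negp (ρ * S ω + t * H ω - c) ^ 2) P)
    (hρ : |ρ| ≤ 1) (ht : 0 ≤ t) (hc : 0 < c) : 0 < negSqMean P S H ρ t c := by
  have hevent : S ⁻¹' Ioo (-c) c ∩ H ⁻¹' Iio 0 ⊆
      Function.support fun ω => negp (ρ * S ω + t * H ω - c) ^ 2 := by
    rintro ω ⟨hSω, hHω⟩
    have hρS : ρ * S ω ≤ |S ω| :=
      (le_abs_self _).trans (by rw [abs_mul]; exact mul_le_of_le_one_left (abs_nonneg _) hρ)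
    have htH : t * H ω ≤ 0 := mul_nonpos_of_nonneg_of_nonpos ht (le_of_lt hHω)
    exact (sq_negp_pos (by linarith [abs_lt.mpr hSω])).ne'
  have hSG' : S ⁻¹' Ioo (-c) c = G ⁻¹' Ioo (-c) c := by
    ext ω
    simp only [mem_preimage, mem_Ioo, ← abs_lt, hSG]
  have hprob : 0 < P (S ⁻¹' Ioo (-c) c ∩ H ⁻¹' Iio 0) := by
    rw [hindep.measure_inter_preimage_eq_mul _ _ measurableSet_Ioo measurableSet_Iio, hSG']
    exact ENNReal.mul_pos
      (measure_preimage_pos_of_map_eq_stdGaussianR hG hGlaw measurableSet_Ioo (by simp [hc])).ne'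
      (measure_preimage_pos_of_map_eq_stdGaussianR hH hHlaw measurableSet_Iio (by simp)).ne'
  exact (integral_pos_iff_support_of_nonneg (fun ω => sq_nonneg _) hint).mpr
    (hprob.trans_le (measure_mono hevent))

lemma negSqMean_midpoint_le {κ a₁ b₁ a₂ b₂ c : ℝ} (hκ : 0 < κ)
    (hint : ∀ a b, Integrable (fun ω => negp (a * S ω + b * H ω - c) ^ 2) P)
    (hb₁ : 0 < b₁) (hb₂ : 0 < b₂)
    (h₁ : negSqMean P S H a₁ b₁ c ≤ κ * b₁ ^ 2) (h₂ : negSqMean P S H a₂ b₂ c ≤ κ * b₂ ^ 2) :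
    negSqMean P S H ((a₁ + a₂) / 2) ((b₁ + b₂) / 2) c ≤ κ * ((b₁ + b₂) / 2) ^ 2 := by
  have hsq : ∀ b, κ * b ^ 2 = (√κ * b) ^ 2 := fun b => by rw [mul_pow, Real.sq_sqrt hκ.le]
  rw [hsq] at h₁ h₂ ⊢
  rw [show √κ * ((b₁ + b₂) / 2) = (√κ * b₁ + √κ * b₂) / 2 by ring]
  exact integral_sq_le_of_abs_le_midpoint (hint a₁ b₁) (hint a₂ b₂) (by positivity)
    (by positivity) h₁ h₂ fun ω => by
      convert abs_negp_midpoint (a₁ * S ω + b₁ * H ω - c) (a₂ * S ω + b₂ * H ω - c) using 3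
      ring

lemma sq_le_of_negSqMean_le {κ qstar a b : ℝ} (hκ : 0 ≤ κ) (hq : 0 ≤ qstar)
    (hint : ∀ a b c, Integrable (fun ω => negp (a * S ω + b * H ω - c) ^ 2) P)
    (hqzero : ⨅ ρ : Icc (-1 : ℝ) 1, eta P S H κ qstar ρ = 0)
    (hquniq : ∀ q, 0 < q → ⨅ ρ : Icc (-1 : ℝ) 1, eta P S H κ q ρ = 0 → q = qstar)
    (hb : 0 < b) (hJ : negSqMean P S H a b 1 ≤ κ * b ^ 2) : qstar ^ 2 ≤ a ^ 2 + b ^ 2 := by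
  have : Nonempty (Icc (-1 : ℝ) 1) := ⟨⟨0, by norm_num⟩⟩
  set r := √(a ^ 2 + b ^ 2)
  have hr : 0 < r := Real.sqrt_pos.2 (by positivity)
  have hr2 : a ^ 2 + b ^ 2 = r ^ 2 := (Real.sq_sqrt (by positivity)).symm
  rw [hr2]
  by_contra! hlt
  have hrq : r < qstar := lt_of_pow_lt_pow_left₀ 2 hq hlt
  have hnonneg : ∀ ρ : Icc (-1 : ℝ) 1, 0 ≤ eta P S H κ r ρ := fun ρ =>
    (hqzero ▸ ciInf_le (bddBelow_eta hκ qstar) ρ).trans (eta_le_eta_of_le hint hr hrq.le ρ)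
  have har := abs_le_of_sq_le_sq' (a := a) (b := r) (by nlinarith) hr.le
  have hρ : a / r ∈ Icc (-1 : ℝ) 1 :=
    ⟨by rw [le_div_iff₀ hr]; linarith [har.1], by rw [div_le_iff₀ hr]; linarith [har.2]⟩
  have hnonpos : eta P S H κ r (a / r) ≤ 0 := by
    rw [eta_div_eq hb.le hr hr2]
    exact div_nonpos_of_nonpos_of_nonneg (by linarith) (by positivity)
  have hinf : ⨅ ρ : Icc (-1 : ℝ) 1, eta P S H κ r ρ = 0 :=
    le_antisymm ((ciInf_le (bddBelow_eta hκ r) ⟨a / r, hρ⟩).trans hnonpos) (le_ciInf hnonneg)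
  exact hrq.ne (hquniq r hr hinf)

lemma negSqMean_le_of_eta_nonpos {κ q ρ : ℝ} (hκ : 0 < κ) (hq : 0 < q)
    (hpos : 0 < negSqMean P S H ρ √(1 - ρ ^ 2) (1 / q)) (hη : eta P S H κ q ρ ≤ 0) :
    0 < q * √(1 - ρ ^ 2) ∧
      negSqMean P S H (q * ρ) (q * √(1 - ρ ^ 2)) 1 ≤ κ * (q * √(1 - ρ ^ 2)) ^ 2 := by
  have h1ρ : 0 < 1 - ρ ^ 2 := by
    rw [eta] at hη
    by_contra! h
    nlinarith
  have hb : 0 < q * √(1 - ρ ^ 2) := mul_pos hq (Real.sqrt_pos.2 h1ρ)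
  refine ⟨hb, ?_⟩
  have hab : (q * ρ) ^ 2 + (q * √(1 - ρ ^ 2)) ^ 2 = q ^ 2 := by
    rw [mul_pow, mul_pow, Real.sq_sqrt h1ρ.le]
    ring
  rw [← mul_div_cancel_left₀ ρ hq.ne', eta_div_eq hb.le hq hab, div_le_iff₀ (by positivity)] at hη
  linarith

lemma eq_of_isMinOn_eta {κ qstar ρ₁ ρ₂ : ℝ} (hκ : 0 < κ) (hq : 0 < qstar)
    (hint : ∀ a b c, Integrable (fun ω => negp (a * S ω + b * H ω - c) ^ 2) P)
    (hpos : ∀ ρ ∈ Icc (-1 : ℝ) 1, 0 < negSqMean P S H ρ √(1 - ρ ^ 2) (1 / qstar))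
    (hqzero : ⨅ ρ : Icc (-1 : ℝ) 1, eta P S H κ qstar ρ = 0)
    (hquniq : ∀ q, 0 < q → ⨅ ρ : Icc (-1 : ℝ) 1, eta P S H κ q ρ = 0 → q = qstar)
    (h₁ : ρ₁ ∈ Icc (-1 : ℝ) 1) (h₂ : ρ₂ ∈ Icc (-1 : ℝ) 1)
    (hmin₁ : IsMinOn (eta P S H κ qstar) (Icc (-1) 1) ρ₁)
    (hmin₂ : IsMinOn (eta P S H κ qstar) (Icc (-1) 1) ρ₂) : ρ₁ = ρ₂ := by
  have : Nonempty (Icc (-1 : ℝ) 1) := ⟨⟨0, by norm_num⟩⟩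
  have hη : ∀ ρ, IsMinOn (eta P S H κ qstar) (Icc (-1) 1) ρ → eta P S H κ qstar ρ ≤ 0 :=
    fun ρ hmin => hqzero ▸ le_ciInf fun ρ' => isMinOn_iff.mp hmin ρ' ρ'.2
  obtain ⟨hb₁, hJ₁⟩ := negSqMean_le_of_eta_nonpos hκ hq (hpos ρ₁ h₁) (hη ρ₁ hmin₁)
  obtain ⟨hb₂, hJ₂⟩ := negSqMean_le_of_eta_nonpos hκ hq (hpos ρ₂ h₂) (hη ρ₂ hmin₂)
  have hmid := sq_le_of_negSqMean_le hκ.le hq.le hint hqzero hquniq (by positivity)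
    (negSqMean_midpoint_le hκ (fun a b => hint a b 1) hb₁ hb₂ hJ₁ hJ₂)
  have hcirc : ∀ ρ ∈ Icc (-1 : ℝ) 1, (qstar * ρ) ^ 2 + (qstar * √(1 - ρ ^ 2)) ^ 2 = qstar ^ 2 :=
    fun ρ hρ => by
      rw [mul_pow, mul_pow, Real.sq_sqrt (by nlinarith [hρ.1, hρ.2])]
      ring
  -- the midpoint of two distinct points of the circle of radius `qstar` lies strictly inside
  by_contra hne
  have hd : 0 < (qstar * ρ₁ - qstar * ρ₂) ^ 2 :=
    pow_two_pos_of_ne_zero (sub_ne_zero.2 ((mul_right_injective₀ hq.ne').ne hne))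
  nlinarith [hcirc ρ₁ h₁, hcirc ρ₂ h₂, sq_nonneg (qstar * √(1 - ρ₁ ^ 2) - qstar * √(1 - ρ₂ ^ 2))]

end Eta

theorem eta_unique_minimizer_general
    {Ω : Type*} [MeasurableSpace Ω] (P : Measure Ω) [IsProbabilityMeasure P]
    (κ : ℝ) (hκ : 0 < κ)
    (H G Y : Ω → ℝ)
    (hHm : Measurable H) (hGm : Measurable G) (hYm : Measurable Y)
    (hY : ∀ ω, Y ω = 1 ∨ Y ω = -1)
    (hH : Measure.map H P = stdGaussianR) (hG : Measure.map G P = stdGaussianR)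
    (S : Ω → ℝ) (hS : S = fun ω => G ω * Y ω)
    (hindep : IndepFun S H P)
    (qstar : ℝ) (hq0 : 0 < qstar)
    (hqzero : (⨅ ρ : Set.Icc (-1 : ℝ) 1,
        ((∫ ω, (negp ((ρ : ℝ) * S ω + Real.sqrt (1 - (ρ : ℝ) ^ 2) * H ω - 1 / qstar)) ^ 2 ∂P)
          - (1 - (ρ : ℝ) ^ 2) * κ)) = 0)
    (hquniq : ∀ q : ℝ, 0 < q →
      (⨅ ρ : Set.Icc (-1 : ℝ) 1,
        ((∫ ω, (negp ((ρ : ℝ) * S ω + Real.sqrt (1 - (ρ : ℝ) ^ 2) * H ω - 1 / q)) ^ 2 ∂P)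
          - (1 - (ρ : ℝ) ^ 2) * κ)) = 0 → q = qstar) :
    ∃! ρstar : ℝ, ρstar ∈ Set.Icc (-1 : ℝ) 1 ∧
      ∀ ρ ∈ Set.Icc (-1 : ℝ) 1,
        ((∫ ω, (negp (ρstar * S ω + Real.sqrt (1 - ρstar ^ 2) * H ω - 1 / qstar)) ^ 2 ∂P)
            - (1 - ρstar ^ 2) * κ)
          ≤ ((∫ ω, (negp (ρ * S ω + Real.sqrt (1 - ρ ^ 2) * H ω - 1 / qstar)) ^ 2 ∂P)
            - (1 - ρ ^ 2) * κ) := by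
  have hSm : Measurable S := hS ▸ hGm.mul hYm
  have hSG : ∀ ω, |S ω| = |G ω| := fun ω => by
    rcases hY ω with h | h <;> simp [hS, h]
  have hS2 : Integrable (fun ω => S ω ^ 2) P :=
    (integrable_sq_of_map_eq_stdGaussianR hGm.aemeasurable hG).congr
      (ae_of_all _ fun ω => show G ω ^ 2 = S ω ^ 2 by rw [← sq_abs (S ω), hSG, sq_abs])
  have hH2 := integrable_sq_of_map_eq_stdGaussianR hHm.aemeasurable hH
  have hint := integrable_negp_sq hSm.aestronglyMeasurable hHm.aestronglyMeasurable hS2 hH2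
  have hpos : ∀ ρ ∈ Icc (-1 : ℝ) 1, 0 < negSqMean P S H ρ √(1 - ρ ^ 2) (1 / qstar) :=
    fun ρ hρ => negSqMean_pos hGm.aemeasurable hG hHm.aemeasurable hH hSG hindep (hint _ _ _)
      (abs_le.2 hρ) (Real.sqrt_nonneg _) (by positivity)
  change ⨅ ρ : Icc (-1 : ℝ) 1, eta P S H κ qstar ρ = 0 at hqzero
  change ∀ q, 0 < q → ⨅ ρ : Icc (-1 : ℝ) 1, eta P S H κ q ρ = 0 → q = qstar at hquniq
  change ∃! ρstar, ρstar ∈ Icc (-1 : ℝ) 1 ∧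
    ∀ ρ ∈ Icc (-1 : ℝ) 1, eta P S H κ qstar ρstar ≤ eta P S H κ qstar ρ
  simp only [← isMinOn_iff]
  obtain ⟨ρ₀, hρ₀, hmin₀⟩ :=
    isCompact_Icc.exists_isMinOn (nonempty_Icc.2 (by norm_num : (-1 : ℝ) ≤ 1))
    (continuous_eta hSm.aestronglyMeasurable hHm.aestronglyMeasurable hS2 hH2 κ qstar).continuousOn
  exact ⟨ρ₀, ⟨hρ₀, hmin₀⟩, fun ρ ⟨hρ, hmin⟩ =>
    eq_of_isMinOn_eta hκ hq0 hint hpos hqzero hquniq hρ hρ₀ hmin hmin₀⟩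

/-- under `κ > min_t E[(H + tS)₋²]`, with `q⋆` the unique zero of
`q ↦ min_{ρ∈[−1,1]} η(q, ρ)` on `(0,∞)`, the function `ρ ↦ η(q⋆, ρ)` admits a unique
minimizer `ρ⋆` on `[−1, 1]`, where `η(q, ρ) = E[(ρS + H√(1−ρ²) − 1/q)₋²] − (1−ρ²)κ`. -/
theorem eta_unique_minimizer
    {Ω : Type*} [MeasurableSpace Ω] (P : Measure Ω) [IsProbabilityMeasure P]
    (κ : ℝ) (hκ : 0 < κ)
    (H G Y : Ω → ℝ)
    (hHm : Measurable H) (hGm : Measurable G) (hYm : Measurable Y)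
    (hY : ∀ ω, Y ω = 1 ∨ Y ω = -1)
    (hH : Measure.map H P = stdGaussianR) (hG : Measure.map G P = stdGaussianR)
    (S : Ω → ℝ) (hS : S = fun ω => G ω * Y ω)
    (hindep : IndepFun S H P)
    (hdens : ∀ ρ ∈ Set.Icc (-1 : ℝ) 1, ∃ f : ℝ → ℝ, (∀ x, 0 < f x) ∧
      Measure.map (fun ω => ρ * S ω + Real.sqrt (1 - ρ ^ 2) * H ω) P
        = (volume : Measure ℝ).withDensity fun x => ENNReal.ofReal (f x))
    (hsep : (⨅ t : ℝ, ∫ ω, (negp (H ω + t * S ω)) ^ 2 ∂P) < κ)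
    (qstar : ℝ) (hq0 : 0 < qstar)
    (hqzero : (⨅ ρ : Set.Icc (-1 : ℝ) 1,
        ((∫ ω, (negp ((ρ : ℝ) * S ω + Real.sqrt (1 - (ρ : ℝ) ^ 2) * H ω - 1 / qstar)) ^ 2 ∂P)
          - (1 - (ρ : ℝ) ^ 2) * κ)) = 0)
    (hquniq : ∀ q : ℝ, 0 < q →
      (⨅ ρ : Set.Icc (-1 : ℝ) 1,
        ((∫ ω, (negp ((ρ : ℝ) * S ω + Real.sqrt (1 - (ρ : ℝ) ^ 2) * H ω - 1 / q)) ^ 2 ∂P)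
          - (1 - (ρ : ℝ) ^ 2) * κ)) = 0 → q = qstar) :
    ∃! ρstar : ℝ, ρstar ∈ Set.Icc (-1 : ℝ) 1 ∧
      ∀ ρ ∈ Set.Icc (-1 : ℝ) 1,
        ((∫ ω, (negp (ρstar * S ω + Real.sqrt (1 - ρstar ^ 2) * H ω - 1 / qstar)) ^ 2 ∂P)
            - (1 - ρstar ^ 2) * κ)
          ≤ ((∫ ω, (negp (ρ * S ω + Real.sqrt (1 - ρ ^ 2) * H ω - 1 / qstar)) ^ 2 ∂P)
            - (1 - ρ ^ 2) * κ) :=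
  eta_unique_minimizer_general P κ hκ H G Y hHm hGm hYm hY hH hG S hS hindep qstar hq0 hqzero hquniq
end

section
/- Let ℓ(t) = log(1 + e^{−t}) be the logistic loss and λ > 0. Let H be standard Gaussian and X = GY with G standard Gaussian independent of H and Y ∈ {±1}, so that (H, X) has strictly positive joint density on ℝ². Then the function G_λ(α, Υ) = E[ min_u { (λ/2)(H + Υ X − u)² + α ℓ(u/α) } ] is jointly strictly convex in (α, Υ) on (0, ∞) × ℝ. -/
open MeasureTheory ProbabilityTheory Filter Set

/-- The logistic loss `ℓ(t) = log(1 + e^{−t})`. -/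
noncomputable def logisticLoss (t : ℝ) : ℝ := Real.log (1 + Real.exp (-t))

/-!
The function `(α, r, u) ↦ (λ/2)(r − u)² + α ℓ(u/α)` is jointly convex: a convex quadratic in
`r − u` plus the perspective of `ℓ`. Minimizing over `u` therefore gives a jointly convex envelope
`e(α, r)`, and equality in its convexity inequality forces the two minimizers to have the same
residual `r − u` and the same slope `s = u/α`. With the first-order condition
`λ(u − r) = −ℓ'(u/α)`, this leaves for each `x ≠ 0` at most one `h` at which the convexity
inequality for `(α, Υ) ↦ e(α, h + Υx)` is an equality. So equality holds only on a Lebesgue-null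
set of `(h, x)`, which `(H, X)` avoids almost surely because its law has a density.
-/

lemma hasDerivAt_logisticLoss (t : ℝ) :
    HasDerivAt logisticLoss (-Real.exp (-t) / (1 + Real.exp (-t))) t := by
  have h := ((((hasDerivAt_id t).neg).exp).const_add 1).log (by positivity)
  simp only [mul_neg, mul_one] at h
  exact h

lemma logisticLoss_nonneg (t : ℝ) : 0 ≤ logisticLoss t :=
  Real.log_nonneg (by linarith [Real.exp_pos (-t)])

lemma differentiable_logisticLoss : Differentiable ℝ logisticLoss :=
  fun t => (hasDerivAt_logisticLoss t).differentiableAt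

lemma strictConvexOn_logisticLoss : StrictConvexOn ℝ univ logisticLoss := by
  refine StrictMono.strictConvexOn_univ_of_deriv differentiable_logisticLoss.continuous
    fun s t hst => ?_
  simp only [(hasDerivAt_logisticLoss _).deriv]
  have hs := Real.exp_pos (-s)
  have ht := Real.exp_pos (-t)
  have h := Real.exp_lt_exp.2 (neg_lt_neg hst)
  rw [div_lt_div_iff₀ (by linarith) (by linarith)]
  nlinarith

section Perspective

variable {f : ℝ → ℝ} {α₀ α₁ a b : ℝ}

lemma combo_div_combo_eq (hα₀ : α₀ ≠ 0) (hα₁ : α₁ ≠ 0) (hA : a * α₀ + b * α₁ ≠ 0) (u₀ u₁ : ℝ) :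
    (a * u₀ + b * u₁) / (a * α₀ + b * α₁) =
      a * α₀ / (a * α₀ + b * α₁) * (u₀ / α₀) + b * α₁ / (a * α₀ + b * α₁) * (u₁ / α₁) := by
  field_simp

lemma ConvexOn.perspective_combo_le (hf : ConvexOn ℝ univ f) (hα₀ : 0 < α₀) (hα₁ : 0 < α₁)
    (ha : 0 ≤ a) (hb : 0 ≤ b) (hab : a + b = 1) (u₀ u₁ : ℝ) :
    (a * α₀ + b * α₁) * f ((a * u₀ + b * u₁) / (a * α₀ + b * α₁)) ≤
      a * (α₀ * f (u₀ / α₀)) + b * (α₁ * f (u₁ / α₁)) := by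
  have hA : 0 < a * α₀ + b * α₁ := by
    have := lt_min hα₀ hα₁
    nlinarith [min_le_left α₀ α₁, min_le_right α₀ α₁]
  have h := hf.2 (mem_univ (u₀ / α₀)) (mem_univ (u₁ / α₁))
    (div_nonneg (mul_nonneg ha hα₀.le) hA.le) (div_nonneg (mul_nonneg hb hα₁.le) hA.le)
    (by field_simp)
  simp only [smul_eq_mul] at h
  rw [combo_div_combo_eq hα₀.ne' hα₁.ne' hA.ne']
  calc _ ≤ (a * α₀ + b * α₁) * (a * α₀ / (a * α₀ + b * α₁) * f (u₀ / α₀)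
          + b * α₁ / (a * α₀ + b * α₁) * f (u₁ / α₁)) := mul_le_mul_of_nonneg_left h hA.le
    _ = _ := by field_simp

lemma StrictConvexOn.perspective_combo_lt (hf : StrictConvexOn ℝ univ f) (hα₀ : 0 < α₀)
    (hα₁ : 0 < α₁) (ha : 0 < a) (hb : 0 < b) {u₀ u₁ : ℝ} (hu : u₀ / α₀ ≠ u₁ / α₁) :
    (a * α₀ + b * α₁) * f ((a * u₀ + b * u₁) / (a * α₀ + b * α₁)) <
      a * (α₀ * f (u₀ / α₀)) + b * (α₁ * f (u₁ / α₁)) := by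
  have hA : 0 < a * α₀ + b * α₁ := by positivity
  have h := hf.2 (mem_univ (u₀ / α₀)) (mem_univ (u₁ / α₁)) hu
    (div_pos (mul_pos ha hα₀) hA) (div_pos (mul_pos hb hα₁) hA) (by field_simp)
  simp only [smul_eq_mul] at h
  rw [combo_div_combo_eq hα₀.ne' hα₁.ne' hA.ne']
  calc _ < (a * α₀ + b * α₁) * (a * α₀ / (a * α₀ + b * α₁) * f (u₀ / α₀)
          + b * α₁ / (a * α₀ + b * α₁) * f (u₁ / α₁)) := mul_lt_mul_of_pos_left h hA
    _ = _ := by field_simp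

end Perspective

noncomputable def moreauObj (f : ℝ → ℝ) (lam α r u : ℝ) : ℝ :=
  lam / 2 * (r - u) ^ 2 + α * f (u / α)

noncomputable def moreauEnv (f : ℝ → ℝ) (lam α r : ℝ) : ℝ :=
  ⨅ u, moreauObj f lam α r u

section MoreauObj

variable {f : ℝ → ℝ} {lam α α₀ α₁ a b r u u₀ : ℝ}

lemma moreauObj_combo_le (hf : ConvexOn ℝ univ f) (hlam : 0 ≤ lam) (hα₀ : 0 < α₀)
    (hα₁ : 0 < α₁) (ha : 0 ≤ a) (hb : 0 ≤ b) (hab : a + b = 1) (r₀ r₁ u₀ u₁ : ℝ) :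
    moreauObj f lam (a * α₀ + b * α₁) (a * r₀ + b * r₁) (a * u₀ + b * u₁) ≤
      a * moreauObj f lam α₀ r₀ u₀ + b * moreauObj f lam α₁ r₁ u₁ := by
  have hsq := (Even.convexOn_pow (𝕜 := ℝ) even_two).2 (mem_univ (r₀ - u₀))
    (mem_univ (r₁ - u₁)) ha hb hab
  simp only [smul_eq_mul] at hsq
  have hpersp := hf.perspective_combo_le hα₀ hα₁ ha hb hab u₀ u₁
  unfold moreauObj
  linear_combination (lam / 2) * hsq + hpersp

lemma moreauObj_combo_lt (hf : StrictConvexOn ℝ univ f) (hlam : 0 < lam) (hα₀ : 0 < α₀)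
    (hα₁ : 0 < α₁) (ha : 0 < a) (hb : 0 < b) (hab : a + b = 1) {r₀ r₁ u₀ u₁ : ℝ}
    (hne : r₀ - u₀ ≠ r₁ - u₁ ∨ u₀ / α₀ ≠ u₁ / α₁) :
    moreauObj f lam (a * α₀ + b * α₁) (a * r₀ + b * r₁) (a * u₀ + b * u₁) <
      a * moreauObj f lam α₀ r₀ u₀ + b * moreauObj f lam α₁ r₁ u₁ := by
  have hsq := (Even.convexOn_pow (𝕜 := ℝ) even_two).2 (mem_univ (r₀ - u₀))
    (mem_univ (r₁ - u₁)) ha.le hb.le hab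
  have hpersp := hf.convexOn.perspective_combo_le hα₀ hα₁ ha.le hb.le hab u₀ u₁
  simp only [smul_eq_mul] at hsq
  unfold moreauObj
  rcases hne with hres | hslope
  · have hsq' := (Even.strictConvexOn_pow even_two two_ne_zero).2 (mem_univ _)
      (mem_univ _) hres ha hb hab
    simp only [smul_eq_mul] at hsq'
    linear_combination (lam / 2) * hsq' + hpersp
  · have hpersp' := hf.perspective_combo_lt hα₀ hα₁ ha hb hslope
    linear_combination (lam / 2) * hsq + hpersp'

lemma moreauObj_nonneg (hf : ∀ t, 0 ≤ f t) (hlam : 0 ≤ lam) (hα : 0 ≤ α) (r u : ℝ) :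
    0 ≤ moreauObj f lam α r u := by
  have := hf (u / α)
  unfold moreauObj
  positivity

lemma exists_forall_moreauObj_le (hfc : Continuous f) (hf : ∀ t, 0 ≤ f t) (hlam : 0 < lam)
    (hα : 0 ≤ α) (r : ℝ) : ∃ u₀, ∀ u, moreauObj f lam α r u₀ ≤ moreauObj f lam α r u := by
  refine Continuous.exists_forall_le (by unfold moreauObj; fun_prop)
    (tendsto_atTop_mono (fun u => ?_)
      (((tendsto_pow_atTop two_ne_zero).comp (tendsto_dist_right_cocompact_atTop r)).const_mul_atTop
        (half_pos hlam)))
  have := mul_nonneg hα (hf (u / α))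
  rw [Function.comp_apply, Real.dist_eq, sq_abs, moreauObj]
  nlinarith

lemma hasDerivAt_moreauObj (hf : DifferentiableAt ℝ f (u / α)) (hα : α ≠ 0) :
    HasDerivAt (moreauObj f lam α r) (lam * (u - r) + deriv f (u / α)) u := by
  have hquad := (((hasDerivAt_id u).const_sub r).pow 2).const_mul (lam / 2)
  have hpersp := (hf.hasDerivAt.comp u ((hasDerivAt_id u).div_const α)).const_mul α
  refine (hquad.add hpersp).congr_deriv ?_
  simp only [id]
  field_simp
  ring

lemma moreauObj_deriv_eq_zero (hf : Differentiable ℝ f) (hα : α ≠ 0)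
    (hu₀ : ∀ u, moreauObj f lam α r u₀ ≤ moreauObj f lam α r u) :
    lam * (u₀ - r) + deriv f (u₀ / α) = 0 :=
  IsLocalMin.hasDerivAt_eq_zero (Eventually.of_forall hu₀) (hasDerivAt_moreauObj (hf _) hα)

end MoreauObj

section MoreauEnv

variable {f : ℝ → ℝ} {lam α α₀ α₁ a b r : ℝ}

lemma moreauEnv_le (hf : ∀ t, 0 ≤ f t) (hlam : 0 ≤ lam) (hα : 0 ≤ α) (r u : ℝ) :
    moreauEnv f lam α r ≤ moreauObj f lam α r u :=
  ciInf_le ⟨0, forall_mem_range.2 (moreauObj_nonneg hf hlam hα r)⟩ u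

lemma moreauEnv_nonneg (hf : ∀ t, 0 ≤ f t) (hlam : 0 ≤ lam) (hα : 0 ≤ α) (r : ℝ) :
    0 ≤ moreauEnv f lam α r :=
  le_ciInf (moreauObj_nonneg hf hlam hα r)

lemma moreauEnv_eq_of_forall_le (hf : ∀ t, 0 ≤ f t) (hlam : 0 ≤ lam) (hα : 0 ≤ α) {u₀ : ℝ}
    (hu₀ : ∀ u, moreauObj f lam α r u₀ ≤ moreauObj f lam α r u) :
    moreauEnv f lam α r = moreauObj f lam α r u₀ :=
  (moreauEnv_le hf hlam hα r u₀).antisymm (le_ciInf hu₀)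

lemma moreauEnv_combo_le (hf : ConvexOn ℝ univ f) (hfc : Continuous f) (hf₀ : ∀ t, 0 ≤ f t)
    (hlam : 0 < lam) (hα₀ : 0 < α₀) (hα₁ : 0 < α₁) (ha : 0 ≤ a) (hb : 0 ≤ b) (hab : a + b = 1)
    (r₀ r₁ : ℝ) :
    moreauEnv f lam (a * α₀ + b * α₁) (a * r₀ + b * r₁) ≤
      a * moreauEnv f lam α₀ r₀ + b * moreauEnv f lam α₁ r₁ := by
  obtain ⟨u₀, hu₀⟩ := exists_forall_moreauObj_le hfc hf₀ hlam hα₀.le r₀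
  obtain ⟨u₁, hu₁⟩ := exists_forall_moreauObj_le hfc hf₀ hlam hα₁.le r₁
  rw [moreauEnv_eq_of_forall_le hf₀ hlam.le hα₀.le hu₀,
    moreauEnv_eq_of_forall_le hf₀ hlam.le hα₁.le hu₁]
  exact (moreauEnv_le hf₀ hlam.le (by positivity) _ _).trans
    (moreauObj_combo_le hf hlam.le hα₀ hα₁ ha hb hab r₀ r₁ u₀ u₁)

lemma convexOn_moreauEnv (hf : ConvexOn ℝ univ f) (hfc : Continuous f) (hf₀ : ∀ t, 0 ≤ f t)
    (hlam : 0 < lam) :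
    ConvexOn ℝ (Ioi 0 ×ˢ univ) fun p : ℝ × ℝ => moreauEnv f lam p.1 p.2 :=
  ⟨(convex_Ioi 0).prod convex_univ, fun _ hp _ hq _ _ ha hb hab => by
    simp only [Prod.fst_add, Prod.snd_add, Prod.smul_fst, Prod.smul_snd, smul_eq_mul]
    exact moreauEnv_combo_le hf hfc hf₀ hlam hp.1 hq.1 ha hb hab _ _⟩

lemma continuous_moreauEnv (hf : ConvexOn ℝ univ f) (hfc : Continuous f) (hf₀ : ∀ t, 0 ≤ f t)
    (hlam : 0 < lam) (hα : 0 < α) : Continuous (moreauEnv f lam α) := by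
  have hcont := (convexOn_moreauEnv hf hfc hf₀ hlam).continuousOn (isOpen_Ioi.prod isOpen_univ)
  exact (hcont.comp_continuous (Continuous.prodMk_right α) fun _ => ⟨hα, mem_univ _⟩ :)

/-- `s` is the common value of `u/α` at the two minimizers, which equality forces to agree. -/
lemma exists_slope_of_moreauEnv_combo_eq (hf : StrictConvexOn ℝ univ f)
    (hfd : Differentiable ℝ f) (hf₀ : ∀ t, 0 ≤ f t) (hlam : 0 < lam) (hα₀ : 0 < α₀)
    (hα₁ : 0 < α₁) (ha : 0 < a) (hb : 0 < b) (hab : a + b = 1) {r₀ r₁ : ℝ}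
    (heq : moreauEnv f lam (a * α₀ + b * α₁) (a * r₀ + b * r₁) =
      a * moreauEnv f lam α₀ r₀ + b * moreauEnv f lam α₁ r₁) :
    ∃ s, (α₀ - α₁) * s = r₀ - r₁ ∧ lam * (α₀ * s - r₀) = -deriv f s := by
  obtain ⟨u₀, hu₀⟩ := exists_forall_moreauObj_le hfd.continuous hf₀ hlam hα₀.le r₀
  obtain ⟨u₁, hu₁⟩ := exists_forall_moreauObj_le hfd.continuous hf₀ hlam hα₁.le r₁
  rw [moreauEnv_eq_of_forall_le hf₀ hlam.le hα₀.le hu₀,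
    moreauEnv_eq_of_forall_le hf₀ hlam.le hα₁.le hu₁] at heq
  obtain ⟨hres, hslope⟩ : r₀ - u₀ = r₁ - u₁ ∧ u₀ / α₀ = u₁ / α₁ := by
    by_contra hne
    exact (moreauEnv_le hf₀ hlam.le (by positivity) _ _).not_gt
      (heq ▸ moreauObj_combo_lt hf hlam hα₀ hα₁ ha hb hab (not_and_or.1 hne))
  have hu₀α : α₀ * (u₀ / α₀) = u₀ := mul_div_cancel₀ u₀ hα₀.ne'
  have hu₁α : α₁ * (u₁ / α₁) = u₁ := mul_div_cancel₀ u₁ hα₁.ne'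
  refine ⟨u₀ / α₀, ?_, ?_⟩
  · rw [sub_mul, hu₀α, hslope, hu₁α]
    linarith
  · rw [hu₀α]
    linarith [moreauObj_deriv_eq_zero hfd hα₀.ne' hu₀]

end MoreauEnv

lemma MeasureTheory.Measure.prod_null_of_ae_countable_sections {α β : Type*} [MeasurableSpace α]
    [MeasurableSpace β] {μ : Measure α} {ν : Measure β} [SFinite μ] [SFinite ν]
    [NullSingletonClass μ]
    {s : Set (α × β)} (hs : MeasurableSet s)
    (h : ∀ᵐ y ∂ν, ((fun x => (x, y)) ⁻¹' s).Countable) : μ.prod ν s = 0 := by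
  rw [Measure.prod_apply_symm hs]
  exact (lintegral_congr_ae (h.mono fun _ hy => hy.measure_zero μ)).trans lintegral_zero

lemma integral_lt_integral_of_ae_lt {Ω : Type*} [MeasurableSpace Ω] {μ : Measure Ω} [NeZero μ]
    {f g : Ω → ℝ} (hf : Integrable f μ) (hg : Integrable g μ) (h : ∀ᵐ ω ∂μ, f ω < g ω) :
    ∫ ω, f ω ∂μ < ∫ ω, g ω ∂μ := by
  rw [← sub_pos, ← integral_sub hg hf,
    integral_pos_iff_support_of_nonneg_ae (h.mono fun _ hω => (sub_nonneg.2 hω.le)) (hg.sub hf)]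
  refine pos_iff_ne_zero.2 fun hnull => ?_
  obtain ⟨ω, hlt, hω⟩ := (h.and (measure_eq_zero_iff_ae_notMem.1 hnull)).exists
  exact hω (sub_ne_zero.2 hlt.ne')

/-- The integrand of `G_λ(α, Υ)` at a sample `z = (h, x)` of `(H, X)`, where `q = (α, Υ)`. -/
noncomputable def moreauEnvAt (f : ℝ → ℝ) (lam : ℝ) (q z : ℝ × ℝ) : ℝ :=
  moreauEnv f lam q.1 (z.1 + q.2 * z.2)

section MoreauEnvAt

variable {f : ℝ → ℝ} {lam a b : ℝ} {p q : ℝ × ℝ}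

lemma continuous_moreauEnvAt (hf : ConvexOn ℝ univ f) (hfc : Continuous f)
    (hf₀ : ∀ t, 0 ≤ f t) (hlam : 0 < lam) (hq : 0 < q.1) : Continuous (moreauEnvAt f lam q) :=
  (continuous_moreauEnv hf hfc hf₀ hlam hq).comp (by fun_prop)

lemma moreauEnvAt_combo_le (hf : ConvexOn ℝ univ f) (hfc : Continuous f) (hf₀ : ∀ t, 0 ≤ f t)
    (hlam : 0 < lam) (hp : 0 < p.1) (hq : 0 < q.1) (ha : 0 ≤ a) (hb : 0 ≤ b) (hab : a + b = 1)
    (z : ℝ × ℝ) :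
    moreauEnvAt f lam (a • p + b • q) z ≤
      a * moreauEnvAt f lam p z + b * moreauEnvAt f lam q z := by
  have hcombo :
      a * (z.1 + p.2 * z.2) + b * (z.1 + q.2 * z.2) = z.1 + (a * p.2 + b * q.2) * z.2 := by
    linear_combination z.1 * hab
  simp only [moreauEnvAt, Prod.fst_add, Prod.snd_add, Prod.smul_fst, Prod.smul_snd, smul_eq_mul]
  rw [← hcombo]
  exact moreauEnv_combo_le hf hfc hf₀ hlam hp hq ha hb hab _ _

lemma exists_slope_of_moreauEnvAt_combo_eq (hf : StrictConvexOn ℝ univ f)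
    (hfd : Differentiable ℝ f) (hf₀ : ∀ t, 0 ≤ f t) (hlam : 0 < lam) (hp : 0 < p.1)
    (hq : 0 < q.1) (ha : 0 < a) (hb : 0 < b) (hab : a + b = 1) {h x : ℝ}
    (heq : moreauEnvAt f lam (a • p + b • q) (h, x) =
      a * moreauEnvAt f lam p (h, x) + b * moreauEnvAt f lam q (h, x)) :
    ∃ s, (p.1 - q.1) * s = (p.2 - q.2) * x ∧ lam * (p.1 * s - (h + p.2 * x)) = -deriv f s := by
  have hcombo : a * (h + p.2 * x) + b * (h + q.2 * x) = h + (a * p.2 + b * q.2) * x := by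
    linear_combination h * hab
  obtain ⟨s, hs, hs'⟩ := exists_slope_of_moreauEnv_combo_eq hf hfd hf₀ hlam hp hq ha hb hab
    (r₀ := h + p.2 * x) (r₁ := h + q.2 * x) (by rw [hcombo]; exact heq)
  exact ⟨s, by linear_combination hs, hs'⟩

lemma subsingleton_setOf_moreauEnvAt_combo_eq (hf : StrictConvexOn ℝ univ f)
    (hfd : Differentiable ℝ f) (hf₀ : ∀ t, 0 ≤ f t) (hlam : 0 < lam) (hp : 0 < p.1)
    (hq : 0 < q.1) (hpq : p ≠ q) (ha : 0 < a) (hb : 0 < b) (hab : a + b = 1) {x : ℝ}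
    (hx : x ≠ 0) :
    {h : ℝ | moreauEnvAt f lam (a • p + b • q) (h, x) =
      a * moreauEnvAt f lam p (h, x) + b * moreauEnvAt f lam q (h, x)}.Subsingleton := by
  intro h₀ hh₀ h₁ hh₁
  obtain ⟨s₀, hs₀, hs₀'⟩ :=
    exists_slope_of_moreauEnvAt_combo_eq hf hfd hf₀ hlam hp hq ha hb hab hh₀
  obtain ⟨s₁, hs₁, hs₁'⟩ :=
    exists_slope_of_moreauEnvAt_combo_eq hf hfd hf₀ hlam hp hq ha hb hab hh₁
  rcases eq_or_ne p.1 q.1 with hα | hα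
  · have hΥ : p.2 - q.2 ≠ 0 := sub_ne_zero.2 fun hΥ => hpq (Prod.ext hα hΥ)
    rw [hα, sub_self, zero_mul] at hs₀
    exact absurd hs₀.symm (mul_ne_zero hΥ hx)
  · obtain rfl : s₀ = s₁ := mul_left_cancel₀ (sub_ne_zero.2 hα) (hs₀.trans hs₁.symm)
    linarith [mul_left_cancel₀ hlam.ne' (hs₀'.trans hs₁'.symm)]

lemma ae_moreauEnvAt_combo_lt (hf : StrictConvexOn ℝ univ f) (hfd : Differentiable ℝ f)
    (hf₀ : ∀ t, 0 ≤ f t) (hlam : 0 < lam) (hp : 0 < p.1) (hq : 0 < q.1) (hpq : p ≠ q)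
    (ha : 0 < a) (hb : 0 < b) (hab : a + b = 1) :
    ∀ᵐ z : ℝ × ℝ, moreauEnvAt f lam (a • p + b • q) z <
      a * moreauEnvAt f lam p z + b * moreauEnvAt f lam q z := by
  have hcont : ∀ {q : ℝ × ℝ}, 0 < q.1 → Continuous (moreauEnvAt f lam q) :=
    continuous_moreauEnvAt hf.convexOn hfd.continuous hf₀ hlam
  have hmeas : MeasurableSet {z : ℝ × ℝ | moreauEnvAt f lam (a • p + b • q) z =
      a * moreauEnvAt f lam p z + b * moreauEnvAt f lam q z} :=
    measurableSet_eq_fun (hcont (add_pos (mul_pos ha hp) (mul_pos hb hq))).measurable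
      ((continuous_const.mul (hcont hp)).add (continuous_const.mul (hcont hq))).measurable
  have hnull := Measure.prod_null_of_ae_countable_sections (μ := volume) (ν := volume) hmeas
    ((measure_eq_zero_iff_ae_notMem.1 (measure_singleton 0)).mono fun x hx =>
      (subsingleton_setOf_moreauEnvAt_combo_eq hf hfd hf₀ hlam hp hq hpq ha hb hab hx).countable)
  rw [← Measure.volume_eq_prod] at hnull
  filter_upwards [measure_eq_zero_iff_ae_notMem.1 hnull] with z hz
  exact (moreauEnvAt_combo_le hf.convexOn hfd.continuous hf₀ hlam hp hq ha.le hb.le hab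
    z).lt_of_ne hz

end MoreauEnvAt

lemma integrable_moreauEnv_comp {Ω : Type*} [MeasurableSpace Ω] {P : Measure Ω} [IsFiniteMeasure P]
    {f : ℝ → ℝ} {lam α : ℝ} (hf : ConvexOn ℝ univ f) (hfc : Continuous f) (hf₀ : ∀ t, 0 ≤ f t)
    (hlam : 0 < lam) (hα : 0 < α) {R : Ω → ℝ} (hR : MemLp R 2 P) :
    Integrable (fun ω => moreauEnv f lam α (R ω)) P := by
  refine Integrable.mono' ((hR.integrable_sq.const_mul (lam / 2)).add (integrable_const (α * f 0)))
    ((continuous_moreauEnv hf hfc hf₀ hlam hα).comp_aestronglyMeasurable hR.1) ?_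
  filter_upwards with ω
  rw [Real.norm_eq_abs, abs_of_nonneg (moreauEnv_nonneg hf₀ hlam.le hα.le _)]
  simpa [moreauObj] using moreauEnv_le hf₀ hlam.le hα.le (R ω) 0

lemma memLp_two_of_map_eq_stdGaussianR {Ω : Type*} [MeasurableSpace Ω] {P : Measure Ω}
    {Z : Ω → ℝ} (hZm : Measurable Z) (hZ : P.map Z = stdGaussianR) : MemLp Z 2 P :=
  (memLp_map_measure_iff aestronglyMeasurable_id hZm.aemeasurable).1
    (hZ ▸ memLp_id_gaussianReal 2)

theorem moreau_logistic_strictConvexOn_general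
    {Ω : Type*} [MeasurableSpace Ω] (P : Measure Ω) [IsProbabilityMeasure P]
    (H G Y : Ω → ℝ)
    (hHm : Measurable H) (hGm : Measurable G) (hYm : Measurable Y)
    (hY : ∀ ω, Y ω = 1 ∨ Y ω = -1)
    (hH : Measure.map H P = stdGaussianR) (hG : Measure.map G P = stdGaussianR)
    (X : Ω → ℝ) (hX : X = fun ω => G ω * Y ω)
    (dens : ℝ × ℝ → ℝ)
    (hjoint : Measure.map (fun ω => (H ω, X ω)) P
      = (volume : Measure (ℝ × ℝ)).withDensity fun z => ENNReal.ofReal (dens z))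
    (lam : ℝ) (hlam : 0 < lam) :
    StrictConvexOn ℝ ((Set.Ioi (0 : ℝ)) ×ˢ (Set.univ : Set ℝ))
      (fun q : ℝ × ℝ =>
        ∫ ω, (⨅ u : ℝ, (lam / 2) * (H ω + q.2 * X ω - u) ^ 2
          + q.1 * logisticLoss (u / q.1)) ∂P) := by
  have hXm : Measurable X := hX ▸ hGm.mul hYm
  have hH2 := memLp_two_of_map_eq_stdGaussianR hHm hH
  have hX2 : MemLp X 2 P := (memLp_two_of_map_eq_stdGaussianR hGm hG).of_le
    hXm.aestronglyMeasurable (ae_of_all _ fun ω => by rcases hY ω with h | h <;> simp [hX, h])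
  have hL1 (q : ℝ × ℝ) (hq : 0 < q.1) :
      Integrable (fun ω => moreauEnvAt logisticLoss lam q (H ω, X ω)) P :=
    integrable_moreauEnv_comp strictConvexOn_logisticLoss.convexOn
      differentiable_logisticLoss.continuous logisticLoss_nonneg hlam hq (hH2.add (hX2.const_mul _))
  have hac : P.map (fun ω => (H ω, X ω)) ≪ volume := hjoint ▸ withDensity_absolutelyContinuous _ _
  refine ⟨(convex_Ioi 0).prod convex_univ, fun p hp q hq hpq a b ha hb hab => ?_⟩
  have hlt := ae_of_ae_map (hHm.prodMk hXm).aemeasurable <| hac.ae_le <|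
    ae_moreauEnvAt_combo_lt strictConvexOn_logisticLoss differentiable_logisticLoss
      logisticLoss_nonneg hlam hp.1 hq.1 hpq ha hb hab
  have hL1p := (hL1 p hp.1).const_mul a
  have hL1q := (hL1 q hq.1).const_mul b
  have key := integral_lt_integral_of_ae_lt
    (hL1 _ (add_pos (mul_pos ha hp.1) (mul_pos hb hq.1))) (hL1p.fun_add hL1q) hlt
  rw [integral_add hL1p hL1q, integral_const_mul, integral_const_mul] at key
  exact key

/-- with `H` standard Gaussian and `X = GY` (`G` standard Gaussian independent
of `H`, `Y ∈ {±1}`) such that `(H, X)` has strictly positive joint density on `ℝ²`, the function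
`G_λ(α, Υ) = E[min_u {(λ/2)(H + ΥX − u)² + αℓ(u/α)}]` is jointly strictly convex on
`(0, ∞) × ℝ`. -/
theorem moreau_logistic_strictConvexOn
    {Ω : Type*} [MeasurableSpace Ω] (P : Measure Ω) [IsProbabilityMeasure P]
    (H G Y : Ω → ℝ)
    (hHm : Measurable H) (hGm : Measurable G) (hYm : Measurable Y)
    (hY : ∀ ω, Y ω = 1 ∨ Y ω = -1)
    (hH : Measure.map H P = stdGaussianR) (hG : Measure.map G P = stdGaussianR)
    (hindep : IndepFun G H P)
    (X : Ω → ℝ) (hX : X = fun ω => G ω * Y ω)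
    (dens : ℝ × ℝ → ℝ) (hdens : ∀ z, 0 < dens z)
    (hjoint : Measure.map (fun ω => (H ω, X ω)) P
      = (volume : Measure (ℝ × ℝ)).withDensity fun z => ENNReal.ofReal (dens z))
    (lam : ℝ) (hlam : 0 < lam) :
    StrictConvexOn ℝ ((Set.Ioi (0 : ℝ)) ×ˢ (Set.univ : Set ℝ))
      (fun q : ℝ × ℝ =>
        ∫ ω, (⨅ u : ℝ, (lam / 2) * (H ω + q.2 * X ω - u) ^ 2
          + q.1 * logisticLoss (u / q.1)) ∂P) :=
  moreau_logistic_strictConvexOn_general P H G Y hHm hGm hYm hY hH hG X hX dens hjoint lam hlam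
end
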